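/- arXiv:2212.09336 — 9 statements merged into one kernel-verified Lean document; each statement's English description precedes it below -/
import Mathlib

section
/- Let r ∈ (0,1) and let p be a nonnegative integer. Then L(r,-(p+1)) < r^(2^p) ≤ r, where L(r,-p) denotes the descending Landen sequence of r. -/
/-- Descending Landen sequence: `descL r p = L(r,-p)`. -/
noncomputable def descL (r : ℝ) : ℕ → ℝ
  | 0 => r
  | p + 1 => (descL r p / (1 + Real.sqrt (1 - (descL r p) ^ 2))) ^ 2

/-- Ascending Landen sequence: `ascL r p = L(r,p)`. -/
noncomputable def ascL (r : ℝ) : ℕ → ℝ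
  | 0 => r
  | p + 1 => 2 * Real.sqrt (ascL r p) / (1 + ascL r p)

lemma descL_mem (r : ℝ) (hr : r ∈ Set.Ioo (0:ℝ) 1) (p : ℕ) :
    descL r p ∈ Set.Ioo (0:ℝ) 1 := by
  induction p with
  | zero => exact hr
  | succ p ih =>
    obtain ⟨h0, h1⟩ := ih
    have hs : 0 ≤ Real.sqrt (1 - (descL r p) ^ 2) := Real.sqrt_nonneg _
    have hd : (1:ℝ) < 1 + Real.sqrt (1 - (descL r p) ^ 2) + 0 := by
      have : 0 < Real.sqrt (1 - (descL r p) ^ 2) := by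
        apply Real.sqrt_pos.2; nlinarith
      linarith
    constructor
    · show 0 < (descL r p / (1 + Real.sqrt (1 - (descL r p) ^ 2))) ^ 2
      positivity
    · show (descL r p / (1 + Real.sqrt (1 - (descL r p) ^ 2))) ^ 2 < 1
      have : descL r p / (1 + Real.sqrt (1 - (descL r p) ^ 2)) < 1 := by
        rw [div_lt_one (by linarith)]; linarith
      nlinarith [div_nonneg h0.le (by linarith : (0:ℝ) ≤ 1 + Real.sqrt (1 - (descL r p) ^ 2))]

lemma descL_step_lt (r : ℝ) (hr : r ∈ Set.Ioo (0:ℝ) 1) (p : ℕ) :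
    descL r (p + 1) < (descL r p) ^ 2 := by
  obtain ⟨h0, h1⟩ := descL_mem r hr p
  have hs : 0 < Real.sqrt (1 - (descL r p) ^ 2) := by
    apply Real.sqrt_pos.2; nlinarith
  show (descL r p / (1 + Real.sqrt (1 - (descL r p) ^ 2))) ^ 2 < (descL r p) ^ 2
  have hlt : descL r p / (1 + Real.sqrt (1 - (descL r p) ^ 2)) < descL r p := by
    rw [div_lt_iff₀ (by linarith)]; nlinarith
  have hnn : 0 ≤ descL r p / (1 + Real.sqrt (1 - (descL r p) ^ 2)) :=
    div_nonneg h0.le (by linarith)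
  nlinarith

theorem descL_lt_pow_pow (r : ℝ) (hr : r ∈ Set.Ioo (0:ℝ) 1) (p : ℕ) :
    descL r (p + 1) < r ^ (2 ^ p) ∧ r ^ (2 ^ p) ≤ r := by
  obtain ⟨hr0, hr1⟩ := hr
  constructor
  · induction p with
    | zero =>
      have := descL_step_lt r ⟨hr0, hr1⟩ 0
      simp only [descL, pow_one] at *
      nlinarith
    | succ p ih =>
      have h1 := descL_step_lt r ⟨hr0, hr1⟩ (p + 1)
      have h2 : (descL r (p + 1)) ^ 2 < (r ^ (2 ^ p)) ^ 2 := by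
        have hpos := (descL_mem r ⟨hr0, hr1⟩ (p + 1)).1
        nlinarith [pow_pos hr0 (2 ^ p)]
      calc descL r (p + 2) < (descL r (p + 1)) ^ 2 := h1
        _ < (r ^ (2 ^ p)) ^ 2 := h2
        _ = r ^ (2 ^ (p + 1)) := by rw [← pow_mul, pow_succ]
  · calc r ^ (2 ^ p) ≤ r ^ 1 := pow_le_pow_of_le_one hr0.le hr1.le Nat.one_le_two_pow
      _ = r := pow_one r
end

section
/- Let r ∈ (0,1) and let p be a nonnegative integer. Then L(r,p+1) > r^(2^(-p)) ≥ r, where L(r,p) denotes the ascending Landen sequence of r. -/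
lemma ascL_mem (r : ℝ) (hr : r ∈ Set.Ioo (0:ℝ) 1) (p : ℕ) :
    ascL r p ∈ Set.Ioo (0:ℝ) 1 := by
  induction p with
  | zero => exact hr
  | succ p ih =>
    obtain ⟨h0, h1⟩ := ih
    have hs : 0 < Real.sqrt (ascL r p) := Real.sqrt_pos.mpr h0
    have hd : (0:ℝ) < 1 + ascL r p := by linarith
    constructor
    · show 0 < 2 * Real.sqrt (ascL r p) / (1 + ascL r p)
      positivity
    · show 2 * Real.sqrt (ascL r p) / (1 + ascL r p) < 1
      rw [div_lt_one hd]
      have hsq : Real.sqrt (ascL r p) ^ 2 = ascL r p := Real.sq_sqrt h0.le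
      have hs1 : Real.sqrt (ascL r p) < 1 := by
        nlinarith [Real.sqrt_nonneg (ascL r p)]
      nlinarith

theorem ascL_gt_rpow (r : ℝ) (hr : r ∈ Set.Ioo (0:ℝ) 1) (p : ℕ) :
    r ^ ((2:ℝ) ^ (-(p:ℤ))) < ascL r (p + 1) ∧ r ≤ r ^ ((2:ℝ) ^ (-(p:ℤ))) := by
  obtain ⟨hr0, hr1⟩ := hr
  have key : ∀ p : ℕ, r ^ ((2:ℝ) ^ (-(p:ℤ))) < ascL r (p + 1) := by
    intro p
    induction p with
    | zero =>
      simp only [Nat.cast_zero, neg_zero, zpow_zero, Real.rpow_one]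
      show r < 2 * Real.sqrt (ascL r 0) / (1 + ascL r 0)
      show r < 2 * Real.sqrt r / (1 + r)
      rw [lt_div_iff₀ (by linarith)]
      have hsq : Real.sqrt r ^ 2 = r := Real.sq_sqrt hr0.le
      have hrs : r < Real.sqrt r := by
        nlinarith [Real.sqrt_nonneg r, Real.sqrt_pos.mpr hr0]
      nlinarith
    | succ p ih =>
      obtain ⟨h0, h1⟩ := ascL_mem r ⟨hr0, hr1⟩ (p + 1)
      set a := ascL r (p + 1) with ha
      have hs : 0 < Real.sqrt a := Real.sqrt_pos.mpr h0
      have step : Real.sqrt a < 2 * Real.sqrt a / (1 + a) := by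
        rw [lt_div_iff₀ (by linarith)]
        nlinarith
      have h2 : r ^ ((2:ℝ) ^ (-((p:ℤ)+1))) ≤ Real.sqrt a := by
        have : r ^ ((2:ℝ) ^ (-((p:ℤ)+1))) = Real.sqrt (r ^ ((2:ℝ) ^ (-(p:ℤ)))) := by
          rw [Real.sqrt_eq_rpow, ← Real.rpow_mul hr0.le]
          congr 1
          rw [zpow_neg, zpow_neg, zpow_add₀ (by norm_num : (2:ℝ) ≠ 0)]
          field_simp
        rw [this]
        exact Real.sqrt_le_sqrt ih.le
      have := lt_of_le_of_lt h2 step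
      calc r ^ ((2:ℝ) ^ (-((p+1:ℕ):ℤ))) = r ^ ((2:ℝ) ^ (-((p:ℤ)+1))) := by push_cast; ring_nf
        _ < 2 * Real.sqrt a / (1 + a) := this
        _ = ascL r (p + 1 + 1) := rfl
  refine ⟨key p, ?_⟩
  have h1 : (2:ℝ) ^ (-(p:ℤ)) ≤ 1 := by
    apply zpow_le_one_of_nonpos₀ (by norm_num) (by omega)
  calc r = r ^ (1:ℝ) := (Real.rpow_one r).symm
    _ ≤ r ^ ((2:ℝ) ^ (-(p:ℤ))) := Real.rpow_le_rpow_of_exponent_ge hr0 hr1.le h1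
end

section
/- For all r ∈ (0,1) and all nonnegative integers p, L(r,p)² + L(r',-p)² = 1, where L(r,p) denotes the ascending Landen sequence of r and L(r',-p) denotes the descending Landen sequence of r' = √(1-r²). -/
/-!
If `a ≥ 0` and `a² + b² = 1`, one ascending step sends `a` to `2√a / (1 + a)`, whose square is
`4a / (1 + a)²`, while one descending step sends `b` to `b² / (1 + a)² = (1 - a) / (1 + a)`,
because `√(1 - b²) = a`. The identity `4a + (1 - a)² = (1 + a)²` then shows that the new pair
again lies on the unit circle, so the theorem follows by induction on `p`.
-/

open Real

lemma ascL_nonneg {r : ℝ} (hr : 0 ≤ r) (p : ℕ) : 0 ≤ ascL r p := by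
  induction p with
  | zero => exact hr
  | succ p ih => rw [ascL]; positivity

lemma landen_step_sq_add_sq {a b : ℝ} (ha : 0 ≤ a) (hab : a ^ 2 + b ^ 2 = 1) :
    (2 * √a / (1 + a)) ^ 2 + ((b / (1 + √(1 - b ^ 2))) ^ 2) ^ 2 = 1 := by
  have hpos : 0 < 1 + a := by linarith
  have hasc : (2 * √a / (1 + a)) ^ 2 = 4 * a / (1 + a) ^ 2 := by
    rw [div_pow, mul_pow, sq_sqrt ha]; norm_num
  have hdesc : (b / (1 + √(1 - b ^ 2))) ^ 2 = (1 - a) / (1 + a) := by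
    rw [show 1 - b ^ 2 = a ^ 2 by linarith, sqrt_sq ha, div_pow,
      show b ^ 2 = (1 - a) * (1 + a) by linarith]
    field_simp
  rw [hasc, hdesc]
  field_simp
  ring

theorem ascL_sq_add_descL_sq (r : ℝ) (hr : r ∈ Set.Ioo (0:ℝ) 1) (p : ℕ) :
    ascL r p ^ 2 + descL (Real.sqrt (1 - r ^ 2)) p ^ 2 = 1 := by
  induction p with
  | zero =>
    rw [ascL, descL, sq_sqrt (by nlinarith [hr.1, hr.2])]
    ring
  | succ p ih =>
    rw [ascL, descL]
    exact landen_step_sq_add_sq (ascL_nonneg hr.1.le p) ih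
end

section
/- For all r ∈ (0,1) and all nonnegative integers p, L(r,p+1) > √(1 - (r')^(2^(p+1))), where L(r,p) denotes the ascending Landen sequence of r and r' = √(1-r²). -/
lemma ascL_key (r : ℝ) (hr : r ∈ Set.Ioo (0:ℝ) 1) (p : ℕ) :
    Real.sqrt (1 - Real.sqrt (1 - r ^ 2) ^ (2 ^ p)) < ascL r p := by
  obtain ⟨hr0, hr1⟩ := hr
  have hr2 : (0:ℝ) < 1 - r ^ 2 := by nlinarith
  set c := Real.sqrt (1 - r ^ 2) with hc
  have hc0 : 0 < c := Real.sqrt_pos.2 hr2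
  have hc1 : c < 1 := by
    rw [hc, Real.sqrt_lt' one_pos]; nlinarith
  have hcsq : c ^ 2 = 1 - r ^ 2 := Real.sq_sqrt hr2.le
  induction p with
  | zero =>
    show Real.sqrt (1 - c ^ 2 ^ 0) < ascL r 0
    rw [pow_zero, pow_one]
    have : Real.sqrt (1 - c) < r := by
      rw [Real.sqrt_lt' hr0]
      nlinarith
    exact this
  | succ p ih =>
    obtain ⟨h0, h1⟩ := ascL_mem r ⟨hr0, hr1⟩ p
    set x := ascL r p
    set s := c ^ (2 ^ p) with hsdef
    have hs0 : 0 < s := pow_pos hc0 _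
    have hs1 : s < 1 := pow_lt_one₀ hc0.le hc1 (by positivity)
    have hIH : 1 - s < x ^ 2 := by
      have := ih
      rwa [Real.sqrt_lt' h0] at this
    have hpow : c ^ (2 ^ (p + 1)) = s ^ 2 := by
      rw [hsdef, ← pow_mul, pow_succ]
    show Real.sqrt (1 - c ^ 2 ^ (p+1)) < 2 * Real.sqrt x / (1 + x)
    rw [hpow]
    have hden : (0:ℝ) < 1 + x := by linarith
    have hy : 0 < 2 * Real.sqrt x / (1 + x) := by positivity
    rw [Real.sqrt_lt' hy]
    have hxsq : Real.sqrt x ^ 2 = x := Real.sq_sqrt h0.le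
    have hexp : (2 * Real.sqrt x / (1 + x)) ^ 2 = 4 * x / (1 + x) ^ 2 := by
      rw [div_pow, mul_pow, hxsq]; ring_nf
    rw [hexp, lt_div_iff₀ (by positivity)]
    have h1 : 0 ≤ x * (1 - x) ^ 2 * (x ^ 3 + 4 * x ^ 2 + 6 * x + 4) := by positivity
    have h2 : 0 < (x ^ 2 - (1 - s)) * (2 - x ^ 2 - (1 - s)) * (1 + x) ^ 2 := by
      have ha : 0 < x ^ 2 - (1 - s) := by linarith
      have hb : 0 < 2 - x ^ 2 - (1 - s) := by nlinarith
      positivity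
    nlinarith [h1, h2]

theorem ascL_gt_sqrt_one_sub (r : ℝ) (hr : r ∈ Set.Ioo (0:ℝ) 1) (p : ℕ) :
    Real.sqrt (1 - Real.sqrt (1 - r ^ 2) ^ (2 ^ (p + 1))) < ascL r (p + 1) := by
  exact ascL_key r hr (p + 1)
end

section
/- For every r ∈ (0,1), the complete elliptic integral satisfies 𝒦(r) = (π/2)·∏_{n=1}^∞ (1 + L(r,-n)), where L(r,-n) denotes the descending Landen sequence of r and the infinite product converges. -/
/-- Complete elliptic integral of the first kind. -/
noncomputable def ellK (r : ℝ) : ℝ :=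
  ∫ x in (0:ℝ)..1, 1 / Real.sqrt ((1 - x ^ 2) * (1 - r ^ 2 * x ^ 2))

/-!
Landen's substitution `x = (1 + k) t / (1 + k t²)` maps `(0, 1)` monotonically onto itself and
turns `𝒦(2√k / (1 + k))` into `(1 + k) 𝒦(k)`. Since `k ↦ 2√k / (1 + k)` sends `L(r, -(p+1))` back to
`L(r, -p)`, iterating gives `𝒦(r) = (∏_{n < N} (1 + L(r, -(n+1)))) 𝒦(L(r, -N))`. The terms
`L(r, -N) ≤ r^(N+1)` are summable, so the product converges, and `𝒦` is continuous at `0` with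
`𝒦(0) = π/2` (an arcsine integral), which identifies its value.
-/

open Real Set MeasureTheory intervalIntegral Filter Topology

noncomputable def ellKIntegrand (r x : ℝ) : ℝ := 1 / √((1 - x ^ 2) * (1 - r ^ 2 * x ^ 2))

lemma ellK_eq_integral_ellKIntegrand (r : ℝ) : ellK r = ∫ x in (0:ℝ)..1, ellKIntegrand r x := rfl

lemma ellKIntegrand_zero (x : ℝ) : ellKIntegrand 0 x = 1 / √(1 - x ^ 2) := by
  simp [ellKIntegrand]

lemma hasDerivAt_arcsin_ellKIntegrand_zero {x : ℝ} (hx : x ∈ Ioo (0:ℝ) 1) :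
    HasDerivAt arcsin (ellKIntegrand 0 x) x := by
  rw [ellKIntegrand_zero]
  exact hasDerivAt_arcsin (by linarith [hx.1]) hx.2.ne

lemma intervalIntegrable_ellKIntegrand_zero :
    IntervalIntegrable (ellKIntegrand 0) volume 0 1 :=
  intervalIntegrable_deriv_of_nonneg continuous_arcsin.continuousOn
    (by simpa using fun x hx => hasDerivAt_arcsin_ellKIntegrand_zero hx)
    (fun x _ => by rw [ellKIntegrand_zero]; positivity)

lemma ellK_zero : ellK 0 = π / 2 := by
  rw [ellK_eq_integral_ellKIntegrand, integral_eq_sub_of_hasDerivAt_of_le zero_le_one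
    continuous_arcsin.continuousOn (fun x hx => hasDerivAt_arcsin_ellKIntegrand_zero hx)
    intervalIntegrable_ellKIntegrand_zero, arcsin_one, arcsin_zero, sub_zero]

section bounds

variable {r s x : ℝ}

lemma ellKIntegrand_le_of_sq_le (hrs : r ^ 2 ≤ s ^ 2) (hs : s ^ 2 ≤ 1) (hx : x ^ 2 < 1) :
    ellKIntegrand r x ≤ ellKIntegrand s x := by
  have hsx : s ^ 2 * x ^ 2 < 1 := by nlinarith
  apply one_div_le_one_div_of_le (sqrt_pos.2 (mul_pos (by linarith) (by linarith)))
  exact sqrt_le_sqrt (mul_le_mul_of_nonneg_left (by nlinarith) (by linarith))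

lemma ellKIntegrand_le_mul_ellKIntegrand_zero (hs : s ^ 2 < 1) (hx : x ^ 2 < 1) :
    ellKIntegrand s x ≤ (√(1 - s ^ 2))⁻¹ * ellKIntegrand 0 x := by
  have hbound : (1 - s ^ 2) * (1 - x ^ 2) ≤ (1 - x ^ 2) * (1 - s ^ 2 * x ^ 2) := by
    nlinarith [mul_nonneg (sq_nonneg s) (sq_nonneg (1 - x ^ 2))]
  calc ellKIntegrand s x ≤ 1 / √((1 - s ^ 2) * (1 - x ^ 2)) :=
        one_div_le_one_div_of_le (sqrt_pos.2 (mul_pos (by linarith) (by linarith)))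
          (sqrt_le_sqrt hbound)
    _ = (√(1 - s ^ 2))⁻¹ * ellKIntegrand 0 x := by
        rw [ellKIntegrand_zero, sqrt_mul (by linarith)]; field_simp

lemma intervalIntegrable_ellKIntegrand (hs : s ^ 2 < 1) :
    IntervalIntegrable (ellKIntegrand s) volume 0 1 := by
  have hmeas : AEStronglyMeasurable (ellKIntegrand s) (volume.restrict (Ioo 0 1)) :=
    (measurable_const.div (by fun_prop)).aestronglyMeasurable
  rw [intervalIntegrable_iff_integrableOn_Ioo_of_le zero_le_one]
  refine (intervalIntegrable_ellKIntegrand_zero.1.mono_set Ioo_subset_Ioc_self).const_mul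
    (√(1 - s ^ 2))⁻¹ |>.mono' hmeas (ae_restrict_of_forall_mem measurableSet_Ioo fun x hx => ?_)
  have hx2 : x ^ 2 < 1 := by nlinarith [hx.1, hx.2]
  rw [norm_of_nonneg (by unfold ellKIntegrand; positivity)]
  exact ellKIntegrand_le_mul_ellKIntegrand_zero hs hx2

lemma pi_div_two_le_ellK (hs : s ^ 2 < 1) : π / 2 ≤ ellK s := by
  rw [← ellK_zero]
  refine integral_mono_on_of_le_Ioo zero_le_one intervalIntegrable_ellKIntegrand_zero
    (intervalIntegrable_ellKIntegrand hs) fun x hx => ?_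
  exact ellKIntegrand_le_of_sq_le (by simpa using sq_nonneg s) hs.le (by nlinarith [hx.1, hx.2])

lemma ellK_le_inv_sqrt_mul (hs : s ^ 2 < 1) : ellK s ≤ (√(1 - s ^ 2))⁻¹ * (π / 2) := by
  rw [← ellK_zero, ellK_eq_integral_ellKIntegrand, ellK_eq_integral_ellKIntegrand,
    ← intervalIntegral.integral_const_mul]
  refine integral_mono_on_of_le_Ioo zero_le_one (intervalIntegrable_ellKIntegrand hs)
    (intervalIntegrable_ellKIntegrand_zero.const_mul _) fun x hx => ?_
  exact ellKIntegrand_le_mul_ellKIntegrand_zero hs (by nlinarith [hx.1, hx.2])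

end bounds

lemma tendsto_ellK_zero : Tendsto ellK (𝓝 0) (𝓝 (π / 2)) := by
  have hupper : Tendsto (fun s : ℝ => (√(1 - s ^ 2))⁻¹ * (π / 2)) (𝓝 0) (𝓝 (π / 2)) := by
    have hcont : ContinuousAt (fun s : ℝ => (√(1 - s ^ 2))⁻¹ * (π / 2)) 0 :=
      ((by fun_prop : Continuous fun s : ℝ => √(1 - s ^ 2)).continuousAt.inv₀ (by simp)).mul
        continuousAt_const
    simpa using hcont.tendsto
  have hnear : ∀ᶠ s : ℝ in 𝓝 0, s ^ 2 < 1 :=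
    (continuous_pow 2).continuousAt.eventually_lt continuousAt_const (by norm_num)
  exact tendsto_of_tendsto_of_tendsto_of_le_of_le' tendsto_const_nhds hupper
    (hnear.mono fun s hs => pi_div_two_le_ellK hs) (hnear.mono fun s hs => ellK_le_inv_sqrt_mul hs)

section landen

variable {k : ℝ}

noncomputable def landenSubst (k t : ℝ) : ℝ := (1 + k) * t / (1 + k * t ^ 2)

lemma hasDerivAt_landenSubst (hk : 0 ≤ k) (t : ℝ) :
    HasDerivAt (landenSubst k) ((1 + k) * (1 - k * t ^ 2) / (1 + k * t ^ 2) ^ 2) t := by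
  have hden : 1 + k * t ^ 2 ≠ 0 := by positivity
  refine (((hasDerivAt_id t).const_mul (1 + k)).div
    (((hasDerivAt_pow 2 t).const_mul k).const_add 1) hden).congr_deriv ?_
  simp only [id]
  ring

lemma landenSubst_deriv_pos (hk0 : 0 ≤ k) (hk1 : k ≤ 1) {t : ℝ} (ht : t ^ 2 < 1) :
    0 < (1 + k) * (1 - k * t ^ 2) / (1 + k * t ^ 2) ^ 2 := by
  have : 0 < 1 - k * t ^ 2 := by nlinarith
  positivity

lemma strictMonoOn_landenSubst (hk0 : 0 ≤ k) (hk1 : k ≤ 1) :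
    StrictMonoOn (landenSubst k) (Icc 0 1) := by
  refine strictMonoOn_of_hasDerivWithinAt_pos (convex_Icc 0 1)
    (fun t _ => (hasDerivAt_landenSubst hk0 t).continuousAt.continuousWithinAt)
    (fun t _ => (hasDerivAt_landenSubst hk0 t).hasDerivWithinAt) fun t ht => ?_
  rw [interior_Icc] at ht
  exact landenSubst_deriv_pos hk0 hk1 (by nlinarith [ht.1, ht.2])

lemma landenSubst_image_Ioo (hk0 : 0 ≤ k) (hk1 : k ≤ 1) :
    landenSubst k '' Ioo 0 1 = Ioo 0 1 := by
  have hcont : ContinuousOn (landenSubst k) (Icc 0 1) :=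
    fun t _ => (hasDerivAt_landenSubst hk0 t).continuousAt.continuousWithinAt
  rw [hcont.image_Ioo_of_strictMonoOn zero_le_one (strictMonoOn_landenSubst hk0 hk1)]
  norm_num [landenSubst, div_self (show 1 + k ≠ 0 by linarith)]

lemma landenSubst_deriv_mul_ellKIntegrand (hk0 : 0 ≤ k) (hk1 : k ≤ 1) {t : ℝ} (ht : t ^ 2 < 1) :
    (1 + k) * (1 - k * t ^ 2) / (1 + k * t ^ 2) ^ 2 *
      ellKIntegrand (2 * √k / (1 + k)) (landenSubst k t) = (1 + k) * ellKIntegrand k t := by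
  have hkt : 0 < 1 - k * t ^ 2 := by nlinarith
  have hden : 0 < 1 + k * t ^ 2 := by positivity
  have hprod : 0 < (1 - t ^ 2) * (1 - k ^ 2 * t ^ 2) := mul_pos (by linarith) (by nlinarith)
  have hsq : (1 - landenSubst k t ^ 2) * (1 - (2 * √k / (1 + k)) ^ 2 * landenSubst k t ^ 2) =
      (1 - t ^ 2) * (1 - k ^ 2 * t ^ 2) * ((1 - k * t ^ 2) / (1 + k * t ^ 2) ^ 2) ^ 2 := by
    simp only [landenSubst, div_pow, mul_pow, sq_sqrt hk0]
    field_simp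
    ring
  rw [ellKIntegrand, ellKIntegrand, hsq, sqrt_mul hprod.le, sqrt_sq (by positivity)]
  field_simp

theorem ellK_landen (hk0 : 0 ≤ k) (hk1 : k ≤ 1) :
    ellK (2 * √k / (1 + k)) = (1 + k) * ellK k := by
  have hIoo : ∀ r, ellK r = ∫ x in Ioo 0 1, ellKIntegrand r x := fun r => by
    rw [ellK_eq_integral_ellKIntegrand, integral_of_le zero_le_one, integral_Ioc_eq_integral_Ioo]
  have hsubst := integral_image_eq_integral_abs_deriv_smul measurableSet_Ioo
    (fun t _ => (hasDerivAt_landenSubst hk0 t).hasDerivWithinAt)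
    ((strictMonoOn_landenSubst hk0 hk1).injOn.mono Ioo_subset_Icc_self)
    (ellKIntegrand (2 * √k / (1 + k)))
  rw [landenSubst_image_Ioo hk0 hk1] at hsubst
  rw [hIoo, hIoo, hsubst, ← MeasureTheory.integral_const_mul]
  refine setIntegral_congr_fun measurableSet_Ioo fun t ht => ?_
  have ht2 : t ^ 2 < 1 := by nlinarith [ht.1, ht.2]
  rw [abs_of_pos (landenSubst_deriv_pos hk0 hk1 ht2), smul_eq_mul,
    landenSubst_deriv_mul_ellKIntegrand hk0 hk1 ht2]

end landen

section descL

variable {r : ℝ}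

lemma descL_nonneg (hr : 0 ≤ r) : ∀ p, 0 ≤ descL r p
  | 0 => hr
  | _ + 1 => sq_nonneg _

lemma descL_succ_le_sq (r : ℝ) (p : ℕ) : descL r (p + 1) ≤ descL r p ^ 2 := by
  rw [descL, div_pow]
  exact div_le_self (sq_nonneg _) (one_le_pow₀ (by linarith [sqrt_nonneg (1 - descL r p ^ 2)]))

lemma descL_le_pow (hr0 : 0 ≤ r) (hr1 : r ≤ 1) (p : ℕ) : descL r p ≤ r ^ (p + 1) := by
  induction p with
  | zero => simp [descL]
  | succ p ih =>
    calc descL r (p + 1) ≤ descL r p ^ 2 := descL_succ_le_sq r p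
      _ ≤ (r ^ (p + 1)) ^ 2 := pow_le_pow_left₀ (descL_nonneg hr0 p) ih 2
      _ = r ^ (2 * p + 2) := by ring
      _ ≤ r ^ (p + 1 + 1) := pow_le_pow_of_le_one hr0 hr1 (by omega)

lemma descL_le_one (hr0 : 0 ≤ r) (hr1 : r ≤ 1) (p : ℕ) : descL r p ≤ 1 :=
  (descL_le_pow hr0 hr1 p).trans (pow_le_one₀ hr0 hr1)

lemma two_mul_sqrt_div_one_add_descL_succ (hr0 : 0 ≤ r) (hr1 : r ≤ 1) (p : ℕ) :
    2 * √(descL r (p + 1)) / (1 + descL r (p + 1)) = descL r p := by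
  have hs0 := descL_nonneg hr0 p
  have hc2 : √(1 - descL r p ^ 2) ^ 2 = 1 - descL r p ^ 2 :=
    sq_sqrt (by nlinarith [descL_le_one hr0 hr1 p])
  rw [descL, sqrt_sq (by positivity)]
  field_simp
  linear_combination (-descL r p) * hc2

lemma ellK_descL_eq_mul (hr0 : 0 ≤ r) (hr1 : r ≤ 1) (p : ℕ) :
    ellK (descL r p) = (1 + descL r (p + 1)) * ellK (descL r (p + 1)) := by
  rw [← two_mul_sqrt_div_one_add_descL_succ hr0 hr1 p]
  exact ellK_landen (descL_nonneg hr0 _) (descL_le_one hr0 hr1 _)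

lemma ellK_eq_prod_mul_ellK_descL (hr0 : 0 ≤ r) (hr1 : r ≤ 1) (N : ℕ) :
    ellK r = (∏ n ∈ Finset.range N, (1 + descL r (n + 1))) * ellK (descL r N) := by
  induction N with
  | zero => simp [descL]
  | succ N ih => rw [ih, ellK_descL_eq_mul hr0 hr1, Finset.prod_range_succ, mul_assoc]

lemma summable_descL_succ (hr0 : 0 ≤ r) (hr1 : r < 1) :
    Summable fun n => descL r (n + 1) :=
  ((summable_nat_add_iff 2).2 (summable_geometric_of_lt_one hr0 hr1)).of_nonneg_of_le
    (fun _ => descL_nonneg hr0 _) (fun _ => descL_le_pow hr0 hr1.le _)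

end descL

theorem ellK_eq_prod_descL (r : ℝ) (hr : r ∈ Set.Ioo (0:ℝ) 1) :
    Multipliable (fun n : ℕ => 1 + descL r (n + 1)) ∧
      ellK r = Real.pi / 2 * ∏' n : ℕ, (1 + descL r (n + 1)) := by
  have hr0 : 0 ≤ r := hr.1.le
  have hsum := summable_descL_succ hr0 hr.2
  have hmult : Multipliable fun n => 1 + descL r (n + 1) :=
    Real.multipliable_one_add_of_summable hsum
  have hdescL : Tendsto (descL r) atTop (𝓝 0) :=
    (tendsto_add_atTop_iff_nat 1).1 hsum.tendsto_atTop_zero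
  have hlim := hmult.hasProd.tendsto_prod_nat.mul (tendsto_ellK_zero.comp hdescL)
  simp only [Function.comp_def, ← ellK_eq_prod_mul_ellK_descL hr0 hr.2.le] at hlim
  rw [tendsto_const_nhds_iff.1 hlim, mul_comm]
  exact ⟨hmult, rfl⟩
end

section
/- (Gauss) Let r ∈ (0,1) and define the arithmetic–geometric mean sequences a₀ = 1, b₀ = r' = √(1-r²), a_{n+1} = (a_n + b_n)/2, b_{n+1} = √(a_n·b_n). Then the sequences (a_n) and (b_n) converge to a common limit AG(1,r'), and 𝒦(r) = π/(2·AG(1,r')). -/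
/-- Arithmetic–geometric mean iteration: `agm a b n = (aₙ, bₙ)`. -/
noncomputable def agm (a b : ℝ) : ℕ → ℝ × ℝ
  | 0 => (a, b)
  | n + 1 => (((agm a b n).1 + (agm a b n).2) / 2,
      Real.sqrt ((agm a b n).1 * (agm a b n).2))

/-!
Gauss's integral `J(a, b) = ∫₀^∞ dt / √((t² + a²)(t² + b²))` is unchanged when `(a, b)` is
replaced by `((a + b)/2, √(ab))`: the substitution `t ↦ (t - ab/t)/2` maps `(0, ∞)` onto `ℝ`
and turns the integrand for the new pair into twice the old one. Since `J` is antitone in each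
argument and `J(c, c) = π/(2c)`, the value `J(aₙ, bₙ) = J(a, b)` is squeezed between
`π/(2aₙ)` and `π/(2bₙ)`, hence equals `π/(2 AG(a, b))`. Finally `x = 1/√(1 + t²)` turns
`𝒦(r)` into `J(1, r')`.
-/

open MeasureTheory Real Set Filter Topology
open scoped NNReal

noncomputable def agmIntegrand (a b t : ℝ) : ℝ :=
  (√((t ^ 2 + a ^ 2) * (t ^ 2 + b ^ 2)))⁻¹

noncomputable def agmIntegral (a b : ℝ) : ℝ :=
  ∫ t in Ioi 0, agmIntegrand a b t

lemma agmIntegrand_self (c t : ℝ) : agmIntegrand c c t = (t ^ 2 + c ^ 2)⁻¹ := by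
  rw [agmIntegrand, sqrt_mul_self (by positivity)]

lemma agmIntegrand_anti {a b a' b' : ℝ} (ha : 0 < a) (hb : 0 < b) (haa' : a ≤ a')
    (hbb' : b ≤ b') (t : ℝ) : agmIntegrand a' b' t ≤ agmIntegrand a b t := by
  unfold agmIntegrand
  gcongr

lemma measurable_agmIntegrand (a b : ℝ) : Measurable (agmIntegrand a b) := by
  unfold agmIntegrand
  fun_prop

lemma integrable_inv_sq_add_sq {c : ℝ} (hc : c ≠ 0) : Integrable fun t : ℝ ↦ (t ^ 2 + c ^ 2)⁻¹ := by
  refine ((integrable_inv_one_add_sq.comp_div hc).const_mul (c ^ 2)⁻¹).congr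
    (.of_forall fun t ↦ ?_)
  field_simp
  ring

lemma integral_Ioi_inv_sq_add_sq {c : ℝ} (hc : 0 < c) :
    ∫ t in Ioi 0, (t ^ 2 + c ^ 2)⁻¹ = π / (2 * c) := by
  have h : ∀ t, (t ^ 2 + c ^ 2)⁻¹ = (c ^ 2)⁻¹ * (1 + (c⁻¹ * t) ^ 2)⁻¹ := fun t ↦ by
    field_simp
    ring
  simp_rw [h, integral_const_mul, integral_comp_mul_left_Ioi (fun u ↦ (1 + u ^ 2)⁻¹) 0
    (inv_pos.2 hc), mul_zero, integral_Ioi_inv_one_add_sq, arctan_zero, smul_eq_mul]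
  field_simp
  ring

lemma integrable_agmIntegrand {a b : ℝ} (ha : 0 < a) (hb : 0 < b) :
    Integrable (agmIntegrand a b) := by
  have hm : 0 < min a b := lt_min ha hb
  refine (integrable_inv_sq_add_sq hm.ne').mono' (measurable_agmIntegrand a b).aestronglyMeasurable
    (.of_forall fun t ↦ ?_)
  rw [norm_of_nonneg (by unfold agmIntegrand; positivity), ← agmIntegrand_self]
  exact agmIntegrand_anti hm hm (min_le_left a b) (min_le_right a b) t

lemma agmIntegral_self {c : ℝ} (hc : 0 < c) : agmIntegral c c = π / (2 * c) := by
  simp_rw [agmIntegral, agmIntegrand_self, integral_Ioi_inv_sq_add_sq hc]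

lemma agmIntegral_anti {a b a' b' : ℝ} (ha : 0 < a) (hb : 0 < b) (haa' : a ≤ a')
    (hbb' : b ≤ b') : agmIntegral a' b' ≤ agmIntegral a b :=
  setIntegral_mono (integrable_agmIntegrand (ha.trans_le haa') (hb.trans_le hbb')).integrableOn
    (integrable_agmIntegrand ha hb).integrableOn (agmIntegrand_anti ha hb haa' hbb')

lemma agmIntegral_mem_Icc {a b : ℝ} (hb : 0 < b) (hba : b ≤ a) :
    agmIntegral a b ∈ Icc (π / (2 * a)) (π / (2 * b)) := by
  have ha := hb.trans_le hba
  rw [← agmIntegral_self ha, ← agmIntegral_self hb]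
  exact ⟨agmIntegral_anti ha hb le_rfl hba, agmIntegral_anti hb hb hba le_rfl⟩

lemma strictMonoOn_half_sub_div {c : ℝ} (hc : 0 < c) :
    StrictMonoOn (fun t : ℝ ↦ (t - c / t) / 2) (Ioi 0) := by
  intro x hx y _ hxy
  have : c / y < c / x := div_lt_div_of_pos_left hc hx hxy
  dsimp only
  linarith

lemma image_Ioi_half_sub_div {c : ℝ} (hc : 0 < c) :
    (fun t : ℝ ↦ (t - c / t) / 2) '' Ioi 0 = univ := by
  refine eq_univ_of_forall fun u ↦ ?_
  have hs : √(u ^ 2 + c) ^ 2 = u ^ 2 + c := sq_sqrt (by positivity)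
  have hu : |u| < √(u ^ 2 + c) := abs_lt_of_sq_lt_sq (by linarith) (sqrt_nonneg _)
  have hpos : 0 < u + √(u ^ 2 + c) := by linarith [neg_abs_le u]
  refine ⟨u + √(u ^ 2 + c), hpos, ?_⟩
  field_simp
  linear_combination hs

lemma hasDerivAt_half_sub_div (c : ℝ) {t : ℝ} (ht : t ≠ 0) :
    HasDerivAt (fun t : ℝ ↦ (t - c / t) / 2) ((1 + c / t ^ 2) / 2) t := by
  refine (((hasDerivAt_id' t).fun_sub ((hasDerivAt_const t c).fun_div (hasDerivAt_id' t)
    ht)).div_const 2).congr_deriv ?_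
  field_simp
  ring

lemma agmIntegrand_agm_step_comp {a b t : ℝ} (ha : 0 < a) (hb : 0 < b) (ht : 0 < t) :
    (1 + a * b / t ^ 2) / 2 * agmIntegrand ((a + b) / 2) √(a * b) ((t - a * b / t) / 2) =
      2 * agmIntegrand a b t := by
  have hG : √(a * b) ^ 2 = a * b := sq_sqrt (by positivity)
  have hA : ((t - a * b / t) / 2) ^ 2 + ((a + b) / 2) ^ 2 =
      (t ^ 2 + a ^ 2) * (t ^ 2 + b ^ 2) / (2 * t) ^ 2 := by
    field_simp
    ring
  have hG' : ((t - a * b / t) / 2) ^ 2 + √(a * b) ^ 2 = ((t ^ 2 + a * b) / (2 * t)) ^ 2 := by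
    rw [hG]
    field_simp
    ring
  have hP : 0 < √((t ^ 2 + a ^ 2) * (t ^ 2 + b ^ 2)) := by positivity
  rw [agmIntegrand, agmIntegrand, hA, hG', sqrt_mul (by positivity), sqrt_div' _ (by positivity),
    sqrt_sq (by positivity), sqrt_sq (by positivity)]
  field_simp

lemma agmIntegral_agm_step {a b : ℝ} (ha : 0 < a) (hb : 0 < b) :
    agmIntegral ((a + b) / 2) √(a * b) = agmIntegral a b := by
  have hab : 0 < a * b := mul_pos ha hb
  have hsubst := integral_image_eq_integral_abs_deriv_smul measurableSet_Ioi
    (fun t ht ↦ (hasDerivAt_half_sub_div (a * b) (ne_of_gt ht)).hasDerivWithinAt)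
    (strictMonoOn_half_sub_div hab).injOn (agmIntegrand ((a + b) / 2) √(a * b))
  rw [image_Ioi_half_sub_div hab, Measure.restrict_univ, setIntegral_congr_fun measurableSet_Ioi
    fun t ht ↦ by rw [abs_of_pos (by positivity), smul_eq_mul,
      agmIntegrand_agm_step_comp ha hb ht], integral_const_mul, ← agmIntegral] at hsubst
  have heven : ∫ u, agmIntegrand ((a + b) / 2) √(a * b) u =
      2 * agmIntegral ((a + b) / 2) √(a * b) := by
    simp_rw [agmIntegral, ← integral_comp_abs, agmIntegrand, sq_abs]
  linarith

lemma strictAntiOn_inv_sqrt_one_add_sq :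
    StrictAntiOn (fun t : ℝ ↦ (√(1 + t ^ 2))⁻¹) (Ioi 0) := by
  intro x hx y _ hxy
  have hx' : 0 < x := hx
  dsimp only
  gcongr

lemma image_Ioi_inv_sqrt_one_add_sq :
    (fun t : ℝ ↦ (√(1 + t ^ 2))⁻¹) '' Ioi 0 = Ioo 0 1 := by
  ext x
  constructor
  · rintro ⟨t, ht, rfl⟩
    have : 1 < √(1 + t ^ 2) := lt_sqrt_of_sq_lt (by nlinarith [mem_Ioi.1 ht])
    exact ⟨by positivity, inv_lt_one_of_one_lt₀ this⟩
  · rintro ⟨hx0, hx1⟩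
    have hx2 : 0 < x⁻¹ ^ 2 - 1 := by nlinarith [one_lt_inv₀ hx0 |>.2 hx1]
    refine ⟨√(x⁻¹ ^ 2 - 1), sqrt_pos.2 hx2, ?_⟩
    dsimp only
    rw [sq_sqrt hx2.le, add_sub_cancel, sqrt_sq (by positivity), inv_inv]

lemma hasDerivAt_inv_sqrt_one_add_sq (t : ℝ) :
    HasDerivAt (fun t : ℝ ↦ (√(1 + t ^ 2))⁻¹) (-(t / (√(1 + t ^ 2) * (1 + t ^ 2)))) t := by
  have h1 : 0 < 1 + t ^ 2 := by positivity
  have hs : √(1 + t ^ 2) ^ 2 = 1 + t ^ 2 := sq_sqrt h1.le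
  refine ((((hasDerivAt_pow 2 t).const_add 1).sqrt h1.ne').inv (by positivity)).congr_deriv ?_
  rw [hs]
  field_simp
  ring

lemma ellK_integrand_comp {r t : ℝ} (hr : r ^ 2 ≤ 1) (ht : 0 < t) :
    t / (√(1 + t ^ 2) * (1 + t ^ 2)) *
        (1 / √((1 - (√(1 + t ^ 2))⁻¹ ^ 2) * (1 - r ^ 2 * (√(1 + t ^ 2))⁻¹ ^ 2))) =
      agmIntegrand 1 √(1 - r ^ 2) t := by
  have h1 : 0 < 1 + t ^ 2 := by positivity
  have hs : (√(1 + t ^ 2))⁻¹ ^ 2 = (1 + t ^ 2)⁻¹ := by rw [inv_pow, sq_sqrt h1.le]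
  have hb : √(1 - r ^ 2) ^ 2 = 1 - r ^ 2 := sq_sqrt (by linarith)
  have hprod : (1 - (1 + t ^ 2)⁻¹) * (1 - r ^ 2 * (1 + t ^ 2)⁻¹) =
      (t / (1 + t ^ 2)) ^ 2 * (t ^ 2 + √(1 - r ^ 2) ^ 2) := by
    rw [hb]
    field_simp
    ring
  rw [hs, hprod, agmIntegrand, sqrt_mul (by positivity), sqrt_sq (by positivity), one_pow,
    add_comm (t ^ 2) 1, sqrt_mul h1.le]
  have : 0 < √(t ^ 2 + √(1 - r ^ 2) ^ 2) := sqrt_pos.2 (by positivity)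
  field_simp

lemma ellK_eq_agmIntegral {r : ℝ} (hr : r ^ 2 ≤ 1) : ellK r = agmIntegral 1 √(1 - r ^ 2) := by
  have hsubst := integral_image_eq_integral_abs_deriv_smul measurableSet_Ioi
    (fun t _ ↦ (hasDerivAt_inv_sqrt_one_add_sq t).hasDerivWithinAt)
    strictAntiOn_inv_sqrt_one_add_sq.injOn
    (fun x ↦ 1 / √((1 - x ^ 2) * (1 - r ^ 2 * x ^ 2)))
  rw [image_Ioi_inv_sqrt_one_add_sq, setIntegral_congr_fun measurableSet_Ioi fun t ht ↦ by
    rw [abs_neg, abs_of_pos (div_pos ht (by positivity)), smul_eq_mul,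
      ellK_integrand_comp hr ht]] at hsubst
  rw [ellK, intervalIntegral.integral_of_le zero_le_one, integral_Ioc_eq_integral_Ioo, hsubst,
    agmIntegral]

lemma agm_pos {a b : ℝ} (ha : 0 < a) (hb : 0 < b) (n : ℕ) :
    0 < (agm a b n).1 ∧ 0 < (agm a b n).2 := by
  induction n with
  | zero => exact ⟨ha, hb⟩
  | succ n ih =>
    obtain ⟨h1, h2⟩ := ih
    exact ⟨by simp only [agm]; positivity, sqrt_pos.2 (mul_pos h1 h2)⟩

lemma agmIntegral_agm {a b : ℝ} (ha : 0 < a) (hb : 0 < b) (n : ℕ) :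
    agmIntegral (agm a b n).1 (agm a b n).2 = agmIntegral a b := by
  induction n with
  | zero => rfl
  | succ n ih => exact (agmIntegral_agm_step (agm_pos ha hb n).1 (agm_pos ha hb n).2).trans ih

lemma agm_succ_eq_agmSequences (x y : ℝ≥0) (n : ℕ) :
    agm x y (n + 1) =
      (((NNReal.agmSequences x y n).2 : ℝ), ((NNReal.agmSequences x y n).1 : ℝ)) := by
  induction n with
  | zero => simp [agm, Real.coe_sqrt]
  | succ n ih =>
    rw [agm.eq_2, ih, NNReal.agmSequences_succ']
    simp [Real.coe_sqrt, add_comm, mul_comm]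

lemma tendsto_agm (x y : ℝ≥0) :
    Tendsto (agm x y) atTop (𝓝 (NNReal.agm x y, NNReal.agm x y)) := by
  rw [← tendsto_add_atTop_iff_nat 1]
  simp_rw [agm_succ_eq_agmSequences]
  exact (NNReal.tendsto_coe.2 NNReal.tendsto_agmSequences_snd_agm).prodMk_nhds
    (NNReal.tendsto_coe.2 NNReal.tendsto_agmSequences_fst_agm)

lemma agmIntegral_eq_pi_div_two_mul_agm {x y : ℝ≥0} (hx : 0 < x) (hy : 0 < y) :
    agmIntegral x y = π / (2 * NNReal.agm x y) := by
  have hℓ : (0 : ℝ) < NNReal.agm x y := NNReal.agm_pos hx hy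
  have hbounds (n : ℕ) : agmIntegral x y ∈
      Icc (π / (2 * (NNReal.agmSequences x y n).2)) (π / (2 * (NNReal.agmSequences x y n).1)) := by
    have hpos := (agm_pos (a := x) (b := y) hx hy (n + 1)).2
    rw [agm_succ_eq_agmSequences] at hpos
    rw [← agmIntegral_agm (a := x) (b := y) hx hy (n + 1), agm_succ_eq_agmSequences]
    exact agmIntegral_mem_Icc hpos (NNReal.agmSequences_fst_le_snd n n)
  have hlim (f : ℕ → ℝ≥0) (hf : Tendsto f atTop (𝓝 (NNReal.agm x y))) :
      Tendsto (fun n ↦ π / (2 * (f n : ℝ))) atTop (𝓝 (π / (2 * NNReal.agm x y))) :=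
    tendsto_const_nhds.div (tendsto_const_nhds.mul (NNReal.tendsto_coe.2 hf)) (by positivity)
  exact tendsto_nhds_unique tendsto_const_nhds <| tendsto_of_tendsto_of_tendsto_of_le_of_le
    (hlim _ NNReal.tendsto_agmSequences_snd_agm) (hlim _ NNReal.tendsto_agmSequences_fst_agm)
    (fun n ↦ (hbounds n).1) (fun n ↦ (hbounds n).2)

theorem gauss_ellK_eq_pi_div_agm (r : ℝ) (hr : r ∈ Set.Ioo (0:ℝ) 1) :
    ∃ ℓ : ℝ,
      Filter.Tendsto (fun n => (agm 1 (Real.sqrt (1 - r ^ 2)) n).1)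
        Filter.atTop (nhds ℓ) ∧
      Filter.Tendsto (fun n => (agm 1 (Real.sqrt (1 - r ^ 2)) n).2)
        Filter.atTop (nhds ℓ) ∧
      ellK r = Real.pi / (2 * ℓ) := by
  obtain ⟨hr0, hr1⟩ := hr
  set b : ℝ≥0 := ⟨√(1 - r ^ 2), sqrt_nonneg _⟩
  have hb : 0 < b := sqrt_pos.2 (by nlinarith)
  have hlim : Tendsto (agm (1 : ℝ≥0) b) atTop _ := tendsto_agm 1 b
  rw [NNReal.coe_one] at hlim
  refine ⟨NNReal.agm 1 b, hlim.fst_nhds, hlim.snd_nhds, ?_⟩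
  rw [ellK_eq_agmIntegral (by nlinarith), ← NNReal.coe_one]
  exact agmIntegral_eq_pi_div_two_mul_agm one_pos hb
end

section
/- Consider the arithmetic–geometric mean iteration with a₀ = 1, b₀ = b ∈ (0,1), a_{n+1} = (a_n + b_n)/2, b_{n+1} = √(a_n·b_n), and let α ∈ [0,1]. Then b_n < L(b^α, n) for all n = 1,2,3,…, where L(b^α, n) denotes the ascending Landen sequence of b^α. -/
lemma sqrt_mul_lt_avg {x y : ℝ} (hx : 0 < x) (hy : 0 < y) (hxy : x ≠ y) :
    Real.sqrt (x * y) < (x + y) / 2 := by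
  have hux := Real.sq_sqrt hx.le
  have huy := Real.sq_sqrt hy.le
  have h1 : Real.sqrt (x * y) = Real.sqrt x * Real.sqrt y := Real.sqrt_mul hx.le y
  have hne : Real.sqrt x ≠ Real.sqrt y := fun h => hxy (by rw [← hux, ← huy, h])
  have h2 : 0 < (Real.sqrt x - Real.sqrt y) ^ 2 :=
    lt_of_le_of_ne (sq_nonneg _) (Ne.symm (pow_ne_zero 2 (sub_ne_zero.2 hne)))
  nlinarith [Real.sqrt_nonneg x, Real.sqrt_nonneg y]

lemma agm_inv (b : ℝ) (hb : b ∈ Set.Ioo (0:ℝ) 1) (n : ℕ) :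
    0 < (agm 1 b n).2 ∧ (agm 1 b n).2 < (agm 1 b n).1 ∧ (agm 1 b n).1 ≤ 1 := by
  induction n with
  | zero => simpa [agm] using ⟨hb.1, hb.2⟩
  | succ n ih =>
    obtain ⟨h1, h2, h3⟩ := ih
    refine ⟨?_, ?_, ?_⟩
    · simp only [agm]
      exact Real.sqrt_pos.2 (mul_pos (h1.trans h2) h1)
    · simp only [agm]
      exact sqrt_mul_lt_avg (h1.trans h2) h1 (ne_of_gt h2)
    · simp only [agm]; linarith

lemma agm_fst_lt_one (b : ℝ) (hb : b ∈ Set.Ioo (0:ℝ) 1) (n : ℕ) (hn : 1 ≤ n) :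
    (agm 1 b n).1 < 1 := by
  obtain ⟨m, rfl⟩ := Nat.exists_eq_add_of_le' hn
  obtain ⟨h1, h2, h3⟩ := agm_inv b hb m
  show (agm 1 b (m + 1)).1 < 1
  simp only [agm]
  linarith

lemma ascL_pos_le_one {r : ℝ} (hr : 0 < r) (hr1 : r ≤ 1) (n : ℕ) :
    0 < ascL r n ∧ ascL r n ≤ 1 := by
  induction n with
  | zero => exact ⟨hr, hr1⟩
  | succ n ih =>
    obtain ⟨h1, h2⟩ := ih
    have hs := Real.sq_sqrt h1.le
    have hsn := Real.sqrt_nonneg (ascL r n)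
    have hsp : 0 < Real.sqrt (ascL r n) := Real.sqrt_pos.2 h1
    constructor
    · show 0 < 2 * Real.sqrt (ascL r n) / (1 + ascL r n)
      positivity
    · show 2 * Real.sqrt (ascL r n) / (1 + ascL r n) ≤ 1
      rw [div_le_one (by linarith)]
      nlinarith [sq_nonneg (1 - Real.sqrt (ascL r n))]

lemma ascL_mono {r s : ℝ} (hr : 0 < r) (hrs : r ≤ s) (hs : s ≤ 1) (n : ℕ) :
    ascL r n ≤ ascL s n := by
  induction n with
  | zero => exact hrs
  | succ n ih =>
    obtain ⟨hx, hx1⟩ := ascL_pos_le_one hr (hrs.trans hs) n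
    obtain ⟨hy, hy1⟩ := ascL_pos_le_one (hr.trans_le hrs) hs n
    set x := ascL r n
    set y := ascL s n
    show 2 * Real.sqrt x / (1 + x) ≤ 2 * Real.sqrt y / (1 + y)
    rw [div_le_div_iff₀ (by linarith) (by linarith)]
    have hux := Real.sq_sqrt hx.le
    have huy := Real.sq_sqrt hy.le
    have huv : Real.sqrt x ≤ Real.sqrt y := Real.sqrt_le_sqrt ih
    have hv1 : Real.sqrt y ≤ 1 := by
      rw [show (1:ℝ) = Real.sqrt 1 by simp]; exact Real.sqrt_le_sqrt hy1
    have hun : 0 ≤ Real.sqrt x := Real.sqrt_nonneg x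
    nlinarith [mul_nonneg (sub_nonneg.2 huv)
      (sub_nonneg.2 (by nlinarith : Real.sqrt x * Real.sqrt y ≤ 1))]

lemma agm_snd_eq (b : ℝ) (hb : b ∈ Set.Ioo (0:ℝ) 1) (n : ℕ) :
    (agm 1 b n).2 = (agm 1 b n).1 * ascL b n := by
  induction n with
  | zero => simp [agm, ascL]
  | succ n ih =>
    obtain ⟨h1, h2, h3⟩ := agm_inv b hb n
    obtain ⟨hc, hc1⟩ := ascL_pos_le_one hb.1 hb.2.le n
    have hA : 0 < (agm 1 b n).1 := h1.trans h2
    set A := (agm 1 b n).1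
    set c := ascL b n
    show Real.sqrt (A * (agm 1 b n).2) = (A + (agm 1 b n).2) / 2 * (2 * Real.sqrt c / (1 + c))
    rw [ih]
    have key : Real.sqrt (A * (A * c)) = A * Real.sqrt c := by
      rw [show A * (A * c) = A ^ 2 * c by ring, Real.sqrt_mul (by positivity),
        Real.sqrt_sq hA.le]
    rw [key]
    field_simp

theorem agm_b_lt_ascL (b : ℝ) (hb : b ∈ Set.Ioo (0:ℝ) 1) (α : ℝ)
    (hα : α ∈ Set.Icc (0:ℝ) 1) (n : ℕ) (hn : 1 ≤ n) :
    (agm 1 b n).2 < ascL (b ^ α) n := by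
  have hA1 : (agm 1 b n).1 < 1 := agm_fst_lt_one b hb n hn
  obtain ⟨hc, hc1⟩ := ascL_pos_le_one hb.1 hb.2.le n
  have heq := agm_snd_eq b hb n
  have hba : b ≤ b ^ α := by
    have := Real.rpow_le_rpow_of_exponent_ge hb.1 hb.2.le hα.2
    rwa [Real.rpow_one] at this
  have hba1 : b ^ α ≤ 1 := Real.rpow_le_one hb.1.le hb.2.le hα.1
  have hmono : ascL b n ≤ ascL (b ^ α) n := ascL_mono hb.1 hba hba1 n
  calc (agm 1 b n).2 = (agm 1 b n).1 * ascL b n := heq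
    _ < 1 * ascL b n := by exact mul_lt_mul_of_pos_right hA1 hc
    _ = ascL b n := one_mul _
    _ ≤ ascL (b ^ α) n := hmono
end

section
/- Let K > 1 and r ∈ (0,1), and set y = log(2(1+√(1-r²))/r). If y/K ≥ log 2, then 4·exp(y/K)/(exp(2·y/K) + 4) < 4^(1-1/K)·r^(1/K). -/
lemma real_rpow_add_le_add_rpow (a b p : ℝ) (ha : 0 ≤ a) (hb : 0 ≤ b)
    (hp : 0 ≤ p) (hp1 : p ≤ 1) : (a + b) ^ p ≤ a ^ p + b ^ p := by
  have h := NNReal.rpow_add_le_add_rpow a.toNNReal b.toNNReal hp hp1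
  have h2 := NNReal.coe_le_coe.2 h
  push_cast at h2
  rwa [Real.coe_toNNReal _ ha, Real.coe_toNNReal _ hb] at h2

theorem v2_inv_lt_classical_bound (K : ℝ) (hK : 1 < K) (r : ℝ)
    (hr : r ∈ Set.Ioo (0:ℝ) 1)
    (h : Real.log 2 ≤ Real.log (2 * (1 + Real.sqrt (1 - r ^ 2)) / r) / K) :
    4 * Real.exp (Real.log (2 * (1 + Real.sqrt (1 - r ^ 2)) / r) / K) /
        (Real.exp (2 * (Real.log (2 * (1 + Real.sqrt (1 - r ^ 2)) / r) / K)) + 4) <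
      (4:ℝ) ^ (1 - 1 / K) * r ^ (1 / K) := by
  obtain ⟨hr0, hr1⟩ := hr
  have hK0 : (0:ℝ) < K := by linarith
  have h1r : (0:ℝ) ≤ 1 - r ^ 2 := by nlinarith
  set s := Real.sqrt (1 - r ^ 2) with hs
  have hs0 : 0 ≤ s := Real.sqrt_nonneg _
  have hs2 : s ^ 2 = 1 - r ^ 2 := Real.sq_sqrt h1r
  set X := 2 * (1 + s) / r with hXdef
  have hXpos : 0 < X := by
    apply div_pos _ hr0
    nlinarith
  have hid : 4 * X / (X ^ 2 + 4) = r := by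
    rw [hXdef]
    field_simp
    nlinarith [hs2, sq_nonneg r]
  set c := 1 / K with hc
  have hc0 : 0 < c := by positivity
  have hc1 : c < 1 := by
    rw [hc, div_lt_one hK0]; linarith
  -- exp(log X / K) = X ^ c
  have hu : Real.exp (Real.log X / K) = X ^ c := by
    rw [Real.rpow_def_of_pos hXpos, hc, mul_one_div]
  set u := X ^ c with hudef
  have hu0 : 0 < u := Real.rpow_pos_of_pos hXpos c
  have hexp2 : Real.exp (2 * (Real.log X / K)) = u * u := by
    rw [two_mul, Real.exp_add, hu]
  rw [hu, hexp2]
  -- RHS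
  have hrval : (4:ℝ) ^ (1 - c) * r ^ c = 4 * u / (X ^ 2 + 4) ^ c := by
    rw [← hid, Real.div_rpow (by positivity) (by positivity),
      Real.mul_rpow (by norm_num) hXpos.le, ← hudef]
    rw [← mul_div_assoc, ← mul_assoc, ← Real.rpow_add (by norm_num : (0:ℝ) < 4)]
    norm_num
  rw [hrval]
  -- key inequality: (X^2+4)^c < u*u + 4
  have hkey : (X ^ 2 + 4) ^ c < u * u + 4 := by
    have h1 : (X ^ 2 + 4) ^ c ≤ (X ^ 2) ^ c + (4:ℝ) ^ c :=
      real_rpow_add_le_add_rpow _ _ _ (by positivity) (by norm_num) hc0.le hc1.le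
    have h2 : (X ^ 2) ^ c = u * u := by
      rw [hudef, ← Real.rpow_natCast X 2, ← Real.rpow_mul hXpos.le,
        ← Real.rpow_add hXpos]
      norm_num
      ring_nf
    have h3 : (4:ℝ) ^ c < 4 := by
      calc (4:ℝ) ^ c < (4:ℝ) ^ (1:ℝ) := Real.rpow_lt_rpow_of_exponent_lt (by norm_num) hc1
        _ = 4 := Real.rpow_one 4
    linarith [h1, h2.symm ▸ h1]
  have hden : (0:ℝ) < (X ^ 2 + 4) ^ c := by positivity
  exact div_lt_div_of_pos_left (by positivity) hden hkey
end

section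
/- Let u, v : (0,1) → (0,∞) be continuous functions such that |u(t) - v(t)| < M for some constant M and all t ∈ (0,1), and u(t) < μ(t) < v(t) for all t ∈ (0,1). Then for every r ∈ (0,1), both 2^(-n)·u(L(r,-n)) and 2^(-n)·v(L(r,-n)) converge to μ(r) as n → ∞, where L(r,-n) denotes the descending Landen sequence of r. -/
/-- The Grötzsch modulus function `μ`. -/
noncomputable def mu (r : ℝ) : ℝ :=
  Real.pi / 2 * ellK (Real.sqrt (1 - r ^ 2)) / ellK r

/-!
Landen's transformation `𝒦(2√k/(1+k)) = (1+k)𝒦(k)`, obtained from the substitution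
`x ↦ (1+k)x/(1+kx²)`, gives the functional equation `μ(L(t,-1)) = 2μ(t)`, hence
`μ(L(r,-n)) = 2ⁿμ(r)`. Since `u < μ < v` and `|u - v| < M`, both `u` and `v` stay within `M`
of `μ`, so `2⁻ⁿu(L(r,-n))` and `2⁻ⁿv(L(r,-n))` differ from `μ(r)` by at most `2⁻ⁿM`.
-/

open MeasureTheory Set Filter Topology

namespace Landen

noncomputable def subst (k x : ℝ) : ℝ := (1 + k) * x / (1 + k * x ^ 2)

variable {k : ℝ}

lemma hasDerivAt_subst (hk : 0 < k) (x : ℝ) :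
    HasDerivAt (subst k) ((1 + k) * (1 - k * x ^ 2) / (1 + k * x ^ 2) ^ 2) x := by
  have hden : 1 + k * x ^ 2 ≠ 0 := by positivity
  have hnum : HasDerivAt (fun x : ℝ => (1 + k) * x) (1 + k) x := by
    simpa using (hasDerivAt_id x).const_mul (1 + k)
  have hden' : HasDerivAt (fun x : ℝ => 1 + k * x ^ 2) (k * (2 * x)) x := by
    simpa [mul_comm, mul_assoc] using ((hasDerivAt_pow 2 x).const_mul k).const_add 1
  have hquot := hnum.div hden' hden
  rwa [show (1 + k) * (1 + k * x ^ 2) - (1 + k) * x * (k * (2 * x)) = (1 + k) * (1 - k * x ^ 2) by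
    ring] at hquot

lemma injOn_subst (hk : k ∈ Ioo (0:ℝ) 1) : InjOn (subst k) (Ioo 0 1) := by
  obtain ⟨hk0, hk1⟩ := hk
  intro x hx y hy hxy
  rw [subst, subst, div_eq_div_iff (by positivity) (by positivity)] at hxy
  have hfactor : (x - y) * ((1 + k) * (1 - k * x * y)) = 0 := by linear_combination hxy
  have hkxy : k * x * y < 1 := by
    have : x * y < 1 := by nlinarith [mul_pos hy.1 (sub_pos.2 hx.2), hy.2]
    nlinarith [mul_pos hx.1 hy.1]
  have hne : (1 + k) * (1 - k * x * y) ≠ 0 := by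
    apply ne_of_gt; apply mul_pos <;> linarith
  exact sub_eq_zero.1 ((mul_eq_zero.1 hfactor).resolve_right hne)

lemma image_subst (hk : k ∈ Ioo (0:ℝ) 1) : subst k '' Ioo 0 1 = Ioo 0 1 := by
  have hk0 := hk.1
  refine Subset.antisymm ?_ ?_
  · rintro _ ⟨x, hx, rfl⟩
    have hkx : k * x < 1 := by nlinarith [mul_pos (sub_pos.2 hk.2) hx.1, hx.2]
    refine ⟨div_pos (mul_pos (by linarith) hx.1) (by positivity), ?_⟩
    rw [subst, div_lt_one (by positivity)]
    nlinarith [mul_pos (sub_pos.2 hx.2) (sub_pos.2 hkx)]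
  · have hcont : ContinuousOn (subst k) (Icc 0 1) :=
      ContinuousOn.div (by fun_prop) (by fun_prop) fun x _ => by positivity
    have h0 : subst k 0 = 0 := by simp [subst]
    have h1 : subst k 1 = 1 := by
      rw [subst, one_pow, mul_one, mul_one, div_self (by linarith)]
    simpa [h0, h1] using intermediate_value_Ioo zero_le_one hcont

lemma ellK_eq_setIntegral (k : ℝ) :
    ellK k = ∫ x in Ioo (0:ℝ) 1, 1 / Real.sqrt ((1 - x ^ 2) * (1 - k ^ 2 * x ^ 2)) := by
  rw [ellK, intervalIntegral.integral_of_le zero_le_one, integral_Ioc_eq_integral_Ioo]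

lemma sq_two_sqrt_div_one_add (hk : 0 ≤ k) : (2 * Real.sqrt k / (1 + k)) ^ 2 = 4 * k / (1 + k) ^ 2 := by
  rw [div_pow, mul_pow, Real.sq_sqrt hk]
  norm_num

lemma abs_deriv_mul_integrand_subst (hk : k ∈ Ioo (0:ℝ) 1) {x : ℝ} (hx : x ∈ Ioo (0:ℝ) 1) :
    |(1 + k) * (1 - k * x ^ 2) / (1 + k * x ^ 2) ^ 2| *
        (1 / Real.sqrt ((1 - subst k x ^ 2) * (1 - (2 * Real.sqrt k / (1 + k)) ^ 2 * subst k x ^ 2)))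
      = (1 + k) * (1 / Real.sqrt ((1 - x ^ 2) * (1 - k ^ 2 * x ^ 2))) := by
  obtain ⟨hk0, hk1⟩ := hk
  obtain ⟨hx0, hx1⟩ := hx
  have hA : 0 < 1 - x ^ 2 := by nlinarith
  have hB : 0 < 1 - k ^ 2 * x ^ 2 := by nlinarith
  have hC : 0 < 1 - k * x ^ 2 := by nlinarith
  have hD : 0 < 1 + k * x ^ 2 := by positivity
  have hS : 0 < Real.sqrt ((1 - x ^ 2) * (1 - k ^ 2 * x ^ 2)) := Real.sqrt_pos.2 (by positivity)
  have hrad : (1 - subst k x ^ 2) * (1 - (2 * Real.sqrt k / (1 + k)) ^ 2 * subst k x ^ 2)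
      = ((1 - x ^ 2) * (1 - k ^ 2 * x ^ 2)) * ((1 - k * x ^ 2) / (1 + k * x ^ 2) ^ 2) ^ 2 := by
    rw [subst, sq_two_sqrt_div_one_add hk0.le]
    field_simp
    ring
  rw [hrad, Real.sqrt_mul (by positivity), Real.sqrt_sq (by positivity), abs_of_pos (by positivity)]
  field_simp

theorem ellK_landen (hk : k ∈ Ioo (0:ℝ) 1) :
    ellK (2 * Real.sqrt k / (1 + k)) = (1 + k) * ellK k := by
  have hchange := integral_image_eq_integral_abs_deriv_smul measurableSet_Ioo
    (fun x _ => (hasDerivAt_subst hk.1 x).hasDerivWithinAt) (injOn_subst hk)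
    (fun y => 1 / Real.sqrt ((1 - y ^ 2) * (1 - (2 * Real.sqrt k / (1 + k)) ^ 2 * y ^ 2)))
  rw [image_subst hk] at hchange
  simp only [smul_eq_mul] at hchange
  rw [ellK_eq_setIntegral, hchange,
    setIntegral_congr_fun measurableSet_Ioo fun x hx => abs_deriv_mul_integrand_subst hk hx,
    integral_const_mul, ellK_eq_setIntegral]

/-- Writing `s = (1-k)/(1+k)`, Landen's transformation applies both to `𝒦(s') = 𝒦(2√k/(1+k))`
and to `𝒦(k') = 𝒦(2√s/(1+s))`. -/
theorem mu_one_sub_div_one_add (hk : k ∈ Ioo (0:ℝ) 1) :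
    mu ((1 - k) / (1 + k)) = 2 * mu (Real.sqrt (1 - k ^ 2)) := by
  obtain ⟨hk0, hk1⟩ := hk
  set s := (1 - k) / (1 + k) with hs
  have hs_mem : s ∈ Ioo (0:ℝ) 1 :=
    ⟨div_pos (by linarith) (by linarith), (div_lt_one (by linarith)).2 (by linarith)⟩
  have hs_add : 1 + s = 2 / (1 + k) := by
    rw [hs]; field_simp; ring
  have hs' : Real.sqrt (1 - s ^ 2) = 2 * Real.sqrt k / (1 + k) := by
    rw [← Real.sqrt_sq (by positivity : 0 ≤ 2 * Real.sqrt k / (1 + k)), sq_two_sqrt_div_one_add hk0.le, hs]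
    congr 1
    field_simp
    ring
  have hk' : Real.sqrt (1 - k ^ 2) = 2 * Real.sqrt s / (1 + s) := by
    rw [hs_add, hs, Real.sqrt_div' _ (by linarith : (0:ℝ) ≤ 1 + k),
      show 1 - k ^ 2 = (1 - k) * (1 + k) by ring, Real.sqrt_mul (by linarith)]
    have : 0 < Real.sqrt (1 + k) := Real.sqrt_pos.2 (by linarith)
    field_simp
    rw [Real.sq_sqrt (by linarith)]
  have hkk : Real.sqrt (1 - Real.sqrt (1 - k ^ 2) ^ 2) = k := by
    rw [Real.sq_sqrt (by nlinarith), sub_sub_cancel, Real.sqrt_sq hk0.le]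
  have hinv : 1 + k = 2 * (1 + s)⁻¹ := by
    rw [hs_add]; field_simp
  rw [mu, mu, hs', ellK_landen ⟨hk0, hk1⟩, hkk, hk', ellK_landen hs_mem, hinv]
  simp only [div_eq_mul_inv, mul_inv]
  ring

end Landen

open Landen

lemma descL_succ_eq (r : ℝ) (n : ℕ) (hn : descL r n ∈ Ioo (0:ℝ) 1) :
    descL r (n + 1) =
      (1 - Real.sqrt (1 - descL r n ^ 2)) / (1 + Real.sqrt (1 - descL r n ^ 2)) := by
  set t := descL r n
  have hsq : Real.sqrt (1 - t ^ 2) ^ 2 = 1 - t ^ 2 := Real.sq_sqrt (by nlinarith [hn.1, hn.2])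
  have hpos : 0 < 1 + Real.sqrt (1 - t ^ 2) := by positivity
  rw [descL, div_pow, div_eq_div_iff (by positivity) hpos.ne']
  linear_combination (1 + Real.sqrt (1 - t ^ 2)) * hsq

lemma sqrt_one_sub_sq_mem_Ioo {t : ℝ} (ht : t ∈ Ioo (0:ℝ) 1) :
    Real.sqrt (1 - t ^ 2) ∈ Ioo (0:ℝ) 1 := by
  obtain ⟨ht0, ht1⟩ := ht
  refine ⟨Real.sqrt_pos.2 (by nlinarith), ?_⟩
  rw [Real.sqrt_lt' one_pos]
  nlinarith

lemma descL_mem_Ioo {r : ℝ} (hr : r ∈ Ioo (0:ℝ) 1) (n : ℕ) : descL r n ∈ Ioo (0:ℝ) 1 := by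
  induction n with
  | zero => exact hr
  | succ n ih =>
    obtain ⟨hk0, hk1⟩ := sqrt_one_sub_sq_mem_Ioo ih
    rw [descL_succ_eq r n ih]
    exact ⟨div_pos (by linarith) (by linarith), (div_lt_one (by linarith)).2 (by linarith)⟩

lemma mu_descL {r : ℝ} (hr : r ∈ Ioo (0:ℝ) 1) (n : ℕ) : mu (descL r n) = 2 ^ n * mu r := by
  induction n with
  | zero => simp [descL]
  | succ n ih =>
    have ht := descL_mem_Ioo hr n
    have htt : Real.sqrt (1 - Real.sqrt (1 - descL r n ^ 2) ^ 2) = descL r n := by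
      rw [Real.sq_sqrt (by nlinarith [ht.1, ht.2]), sub_sub_cancel, Real.sqrt_sq ht.1.le]
    rw [descL_succ_eq r n ht, mu_one_sub_div_one_add (sqrt_one_sub_sq_mem_Ioo ht), htt, ih,
      pow_succ]
    ring

lemma tendsto_two_zpow_neg_mul {a : ℕ → ℝ} {c M : ℝ} (h : ∀ n, |a n - 2 ^ n * c| ≤ M) :
    Tendsto (fun n : ℕ => (2:ℝ) ^ (-(n:ℤ)) * a n) atTop (𝓝 c) := by
  have hbound : ∀ n : ℕ, ‖(2:ℝ) ^ (-(n:ℤ)) * a n - c‖ ≤ (1 / 2 : ℝ) ^ n * M := fun n => by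
    have hfac : (2:ℝ) ^ (-(n:ℤ)) * a n - c = (1 / 2 : ℝ) ^ n * (a n - 2 ^ n * c) := by
      rw [zpow_neg, zpow_natCast, one_div, inv_pow]
      field_simp
    rw [hfac, norm_mul, Real.norm_eq_abs, Real.norm_eq_abs, abs_of_pos (by positivity)]
    exact mul_le_mul_of_nonneg_left (h n) (by positivity)
  have hgeo : Tendsto (fun n : ℕ => (1 / 2 : ℝ) ^ n * M) atTop (𝓝 0) := by
    simpa using (tendsto_pow_atTop_nhds_zero_of_lt_one (r := (1 / 2 : ℝ)) (by norm_num) (by norm_num)).mul_const M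
  simpa using (squeeze_zero_norm hbound hgeo).add_const c

theorem tendsto_scaled_bounds_descL_general (u v : ℝ → ℝ) (M : ℝ)
    (hM : ∀ t ∈ Set.Ioo (0:ℝ) 1, |u t - v t| < M)
    (huv : ∀ t ∈ Set.Ioo (0:ℝ) 1, u t < mu t ∧ mu t < v t)
    (r : ℝ) (hr : r ∈ Set.Ioo (0:ℝ) 1) :
    Filter.Tendsto (fun n : ℕ => (2:ℝ) ^ (-(n:ℤ)) * u (descL r n))
        Filter.atTop (nhds (mu r)) ∧
      Filter.Tendsto (fun n : ℕ => (2:ℝ) ^ (-(n:ℤ)) * v (descL r n))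
        Filter.atTop (nhds (mu r)) := by
  have hclose : ∀ n, |u (descL r n) - 2 ^ n * mu r| ≤ M ∧ |v (descL r n) - 2 ^ n * mu r| ≤ M := by
    intro n
    have ht := descL_mem_Ioo hr n
    obtain ⟨hu, hv⟩ := huv _ ht
    have huvM := abs_sub_lt_iff.1 (hM _ ht)
    rw [← mu_descL hr n, abs_le, abs_le]
    refine ⟨⟨?_, ?_⟩, ?_, ?_⟩ <;> linarith
  exact ⟨tendsto_two_zpow_neg_mul fun n => (hclose n).1,
    tendsto_two_zpow_neg_mul fun n => (hclose n).2⟩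

theorem tendsto_scaled_bounds_descL (u v : ℝ → ℝ) (M : ℝ)
    (hu_cont : ContinuousOn u (Set.Ioo (0:ℝ) 1))
    (hv_cont : ContinuousOn v (Set.Ioo (0:ℝ) 1))
    (hpos : ∀ t ∈ Set.Ioo (0:ℝ) 1, 0 < u t ∧ 0 < v t)
    (hM : ∀ t ∈ Set.Ioo (0:ℝ) 1, |u t - v t| < M)
    (huv : ∀ t ∈ Set.Ioo (0:ℝ) 1, u t < mu t ∧ mu t < v t)
    (r : ℝ) (hr : r ∈ Set.Ioo (0:ℝ) 1) :
    Filter.Tendsto (fun n : ℕ => (2:ℝ) ^ (-(n:ℤ)) * u (descL r n))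
        Filter.atTop (nhds (mu r)) ∧
      Filter.Tendsto (fun n : ℕ => (2:ℝ) ^ (-(n:ℤ)) * v (descL r n))
        Filter.atTop (nhds (mu r)) :=
  tendsto_scaled_bounds_descL_general u v M hM huv r hr
end
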